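/- In the theory T, if T ⊢ w(m(t1,t2)) = w'(m(t'1,t'2)) where w, w' are (possibly empty) sequences of unary symbols and m(t1,t2), m(t'1,t'2) are the outermost subterms rooted at m, then T ⊢ m(t1,t2) = m(t'1,t'2). -/

import Mathlib

/-- Terms of the theory `T`: unary symbols `g x` for each letter `x` of the alphabet `Fin N`,
an extra unary symbol `al` (written α), and a binary symbol `m`, in context `x_1, ..., x_n`. -/
inductive TmT (N : ℕ) : ℕ → Type
  | var {n} : Fin n → TmT N n
  | g {n} : Fin N → TmT N n → TmT N n
  | al {n} : TmT N n → TmT N n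
  | m {n} : TmT N n → TmT N n → TmT N n

/-- A word `w` over the alphabet applied to a term as a composite of unary symbols. -/
def wApp {N n : ℕ} (w : List (Fin N)) (t : TmT N n) : TmT N n :=
  w.foldr (fun x s => TmT.g x s) t

/-- Equational provability in the theory `T` with axioms `u_i(x1) = v_i(x1)` (for `i : Fin M`,
where `u_i = ur i`, `v_i = vr i`) and `m(uα(x1), x2) = m(vα(x2), x1)`, closed under
all substitution instances and congruence. -/
inductive ProvT {N : ℕ} (M : ℕ) (ur vr : Fin M → List (Fin N)) (u v : List (Fin N)) :
    {n : ℕ} → TmT N n → TmT N n → Prop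
  | refl {n} (t : TmT N n) : ProvT M ur vr u v t t
  | symm {n} {s t : TmT N n} : ProvT M ur vr u v s t → ProvT M ur vr u v t s
  | trans {n} {s t w : TmT N n} :
      ProvT M ur vr u v s t → ProvT M ur vr u v t w → ProvT M ur vr u v s w
  | congg {n} (x : Fin N) {s t : TmT N n} :
      ProvT M ur vr u v s t → ProvT M ur vr u v (.g x s) (.g x t)
  | congal {n} {s t : TmT N n} : ProvT M ur vr u v s t → ProvT M ur vr u v (.al s) (.al t)
  | congm {n} {a a' b b' : TmT N n} : ProvT M ur vr u v a a' → ProvT M ur vr u v b b' →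
      ProvT M ur vr u v (.m a b) (.m a' b')
  | axu {n} (i : Fin M) (t : TmT N n) : ProvT M ur vr u v (wApp (ur i) t) (wApp (vr i) t)
  | axm {n} (t₁ t₂ : TmT N n) :
      ProvT M ur vr u v (.m (wApp u (.al t₁)) t₂) (.m (wApp v (.al t₂)) t₁)

/-- A (possibly empty) sequence of unary symbols of `T` (letters of `G` or `α`)
applied to a term. -/
def uApp {N n : ℕ} (w : List (Fin N ⊕ Unit)) (t : TmT N n) : TmT N n :=
  w.foldr (fun x s => match x with | .inl a => TmT.g a s | .inr _ => TmT.al s) t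

/-! Deleting the leading unary symbols of a term respects provability: both sides of a unary axiom
instance differ only in such symbols, and every other axiom instance is rooted at `m`, which the
deletion leaves untouched. -/

def stripUnary {N n : ℕ} : TmT N n → TmT N n
  | .g _ t => stripUnary t
  | .al t => stripUnary t
  | t => t

lemma stripUnary_wApp {N n : ℕ} (w : List (Fin N)) (t : TmT N n) :
    stripUnary (wApp w t) = stripUnary t := by
  induction w with
  | nil => rfl
  | cons x w ih => simpa only [wApp, List.foldr_cons, stripUnary] using ih

lemma stripUnary_uApp {N n : ℕ} (w : List (Fin N ⊕ Unit)) (t : TmT N n) :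
    stripUnary (uApp w t) = stripUnary t := by
  induction w with
  | nil => rfl
  | cons x w ih => cases x <;> simpa only [uApp, List.foldr_cons, stripUnary] using ih

lemma ProvT.map_stripUnary {N M : ℕ} {ur vr : Fin M → List (Fin N)} {u v : List (Fin N)}
    {n : ℕ} {s t : TmT N n} (h : ProvT M ur vr u v s t) :
    ProvT M ur vr u v (stripUnary s) (stripUnary t) := by
  induction h with
  | refl => exact .refl _
  | symm _ ih => exact ih.symm
  | trans _ _ ih₁ ih₂ => exact ih₁.trans ih₂
  | congg _ _ ih => exact ih
  | congal _ ih => exact ih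
  | congm h₁ h₂ => exact .congm h₁ h₂
  | axu => rw [stripUnary_wApp, stripUnary_wApp]; exact .refl _
  | axm t₁ t₂ => exact .axm t₁ t₂

theorem cancel_unary_prefix {N M : ℕ} (ur vr : Fin M → List (Fin N)) (u v : List (Fin N))
    (n : ℕ) (w w' : List (Fin N ⊕ Unit)) (t₁ t₂ t₁' t₂' : TmT N n)
    (h : ProvT M ur vr u v (uApp w (TmT.m t₁ t₂)) (uApp w' (TmT.m t₁' t₂'))) :
    ProvT M ur vr u v (TmT.m t₁ t₂) (TmT.m t₁' t₂') := by
  simpa only [stripUnary_uApp, stripUnary] using h.map_stripUnary
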